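/- Let k be a field of characteristic p > 3 and W(1) = Der_k(k[X]/(X^p)). For any a with 2 ≤ a ≤ p−1, the two-dimensional subspace k·(1+x)∂ + k·(1+x)^a∂ is a Lie subalgebra of W(1), and it is maximal solvable: it is solvable and any solvable Lie subalgebra of W(1) strictly containing it does not exist. -/

import Mathlib

/-!
`W(1)` has the basis `e u = (1+x)^(u+1) ∂`, `u ∈ ZMod p`, with `[e u, e v] = (v - u) e (u + v)`.
Hence `B = span {e 0, e α}` has one-dimensional derived algebra `k e α` and is solvable.
If a subalgebra `C` contains `B`, then `ad (e 0)` acts on `C` diagonally with the pairwise distinct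
eigenvalues `u`, so `C` is spanned by the `e u` it contains. The set of those `u` is closed under
sums of distinct elements; if it contains some `β ∉ {0, α}`, it contains `γ` and `-γ` for some
`γ ≠ 0` (`γ = α` if `β = -α`, and otherwise repeatedly adding `α + β` reaches all of `ZMod p`).
Then `e 0, e γ, e (-γ)` span a copy of `sl₂`, which is perfect as `p ≠ 2`, so `C` is not solvable.
-/

open Polynomial

set_option synthInstance.maxHeartbeats 1000000
set_option maxHeartbeats 1000000

/-- The truncated polynomial algebra `A(1) = k[X]/(X^p)`. -/
noncomputable abbrev TruncPolyAlg (k : Type*) [Field k] (p : ℕ) :=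
  Polynomial k ⧸ Ideal.span {(X : Polynomial k) ^ p}

noncomputable abbrev truncX (k : Type*) [Field k] (p : ℕ) : TruncPolyAlg k p :=
  Ideal.Quotient.mk _ (X : Polynomial k)

theorem Submodule.mem_of_sum_mem_of_eigenvectors {K V ι : Type*} [Field K] [AddCommGroup V]
    [Module K V] [DecidableEq ι] {W : Submodule K V} {f : Module.End K V}
    (hW : ∀ x ∈ W, f x ∈ W) {μ : ι → K} (hμ : Function.Injective μ) {s : Finset ι} :
    ∀ {v : ι → V}, (∀ i, f (v i) = μ i • v i) → ∑ i ∈ s, v i ∈ W → ∀ i ∈ s, v i ∈ W := by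
  induction s using Finset.induction with
  | empty => simp
  | insert j s hj ih =>
    intro v hv hsum
    rw [Finset.sum_insert hj] at hsum
    -- `f - μ j` kills `v j` and rescales every other `v i` by the nonzero factor `μ i - μ j`
    have hshift : f (v j + ∑ i ∈ s, v i) - μ j • (v j + ∑ i ∈ s, v i)
        = ∑ i ∈ s, (μ i - μ j) • v i := by
      simp only [map_add, map_sum, hv, smul_add, Finset.smul_sum, sub_smul,
        Finset.sum_sub_distrib]
      abel
    have hrest : ∀ i ∈ s, v i ∈ W := fun i hi => by
      have hne : μ i - μ j ≠ 0 := sub_ne_zero.mpr (hμ.ne (ne_of_mem_of_not_mem hi hj))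
      refine (W.smul_mem_iff hne).mp (ih (v := fun i => (μ i - μ j) • v i) (fun i => ?_) ?_ i hi)
      · rw [map_smul, hv, smul_comm]
      · exact hshift ▸ sub_mem (hW _ hsum) (W.smul_mem _ hsum)
    intro i hi
    rcases Finset.mem_insert.mp hi with rfl | hi
    · simpa using sub_mem hsum (W.sum_mem hrest)
    · exact hrest i hi

theorem ZMod.cast_ne_zero_of_ne_zero {k : Type*} [Field k] {p : ℕ} [Fact p.Prime] [CharP k p]
    {u : ZMod p} (hu : u ≠ 0) : (ZMod.cast u : k) ≠ 0 :=
  (map_ne_zero (ZMod.castHom (dvd_refl p) k)).mpr hu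

theorem ZMod.exists_mem_and_neg_mem {p : ℕ} [Fact p.Prime] (hp : p ≠ 2) {T : Set (ZMod p)}
    (hT : ∀ u ∈ T, ∀ v ∈ T, u ≠ v → u + v ∈ T) (h0 : 0 ∈ T) {α β : ZMod p} (hα : α ∈ T)
    (hβ : β ∈ T) (hα0 : α ≠ 0) (hβ0 : β ≠ 0) (hαβ : α ≠ β) :
    ∃ γ ≠ 0, γ ∈ T ∧ -γ ∈ T := by
  have h2 : (2 : ZMod p) ≠ 0 := Ring.two_ne_zero (by rwa [ZMod.ringChar_zmod_n])
  by_cases hβα : β = -α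
  · exact ⟨α, hα0, hα, hβα ▸ hβ⟩
  have hs : α + β ≠ 0 := fun h => hβα (eq_neg_of_add_eq_zero_right h)
  have hstep : ∀ t ∈ T, t + (α + β) ∈ T := by
    intro t ht
    by_cases hA : t ≠ α ∧ t + α ≠ β
    · simpa only [add_assoc] using hT _ (hT t ht α hα hA.1) β hβ hA.2
    by_cases hB : t ≠ β ∧ t + β ≠ α
    · simpa only [add_assoc, add_comm β] using hT _ (hT t ht β hβ hB.1) α hα hB.2
    -- adding `t + α = β` and `t + β = α` gives `2 * t = 0`; the other cases contradict
    -- `α ≠ β`, `α ≠ 0` or `β ≠ 0`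
    exfalso
    grind
  have hnsmul (n : ℕ) : n • (α + β) ∈ T := by
    induction n with
    | zero => simpa using h0
    | succ n ih => simpa only [succ_nsmul] using hstep _ ih
  have hall (u : ZMod p) : u ∈ T := by
    simpa only [nsmul_eq_mul, ZMod.natCast_zmod_val, div_mul_cancel₀ _ hs] using
      hnsmul (u / (α + β)).val
  exact ⟨1, one_ne_zero, hall 1, hall (-1)⟩

namespace LieAlgebra

theorem isSolvable_of_forall_lie_mem_span_singleton {R L : Type*} [CommRing R]
    [LieRing L] [LieAlgebra R L] (z : L) (h : ∀ x y : L, ⁅x, y⁆ ∈ R ∙ z) : IsSolvable L := by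
  have hD : (derivedSeries R L 1 : Submodule R L) ≤ R ∙ z := by
    rw [coe_derivedSeries_one_eq, Submodule.span_le]
    rintro _ ⟨x, y, rfl⟩
    exact h x y
  have : IsLieAbelian (derivedSeriesOfIdeal R L 1 ⊤) := ⟨fun x y => by
    obtain ⟨a, ha⟩ := Submodule.mem_span_singleton.mp (hD x.2)
    obtain ⟨b, hb⟩ := Submodule.mem_span_singleton.mp (hD y.2)
    ext
    simp [← ha, ← hb]⟩
  exact IsSolvable.mk ((abelian_iff_derived_succ_eq_bot ⊤ 1).mp this)

theorem not_isSolvable_of_lie_eq_smul {K L : Type*} [Field K] [LieRing L]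
    [LieAlgebra K L] {h e f : L} (hh : h ≠ 0) {a b c : K} (ha : a ≠ 0) (hb : b ≠ 0) (hc : c ≠ 0)
    (he : ⁅h, e⁆ = a • e) (hf : ⁅h, f⁆ = b • f) (hef : ⁅e, f⁆ = c • h) : ¬ IsSolvable L := by
  have step : ∀ n {x y z : L} {d : K}, d ≠ 0 → ⁅x, y⁆ = d • z → x ∈ derivedSeries K L n →
      y ∈ derivedSeries K L n → z ∈ derivedSeries K L (n + 1) := by
    intro n x y z d hd hxy hx hy
    rw [derivedSeries_def, derivedSeriesOfIdeal_succ, ← derivedSeries_def]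
    simpa [hxy, smul_smul, hd] using Submodule.smul_mem _ d⁻¹ (LieSubmodule.lie_mem_lie hx hy)
  have hmem (n : ℕ) :
      h ∈ derivedSeries K L n ∧ e ∈ derivedSeries K L n ∧ f ∈ derivedSeries K L n := by
    induction n with
    | zero => simp
    | succ n ih =>
      obtain ⟨hh, he', hf'⟩ := ih
      exact ⟨step n hc hef he' hf', step n ha he hh he', step n hb hf hh hf'⟩
  intro hsolv
  obtain ⟨n, hn⟩ := (isSolvable_iff K L).mp hsolv
  exact hh (by simpa [hn] using (hmem n).1)

variable (k : Type*) {L : Type*} [Field k] [LieRing L] [LieAlgebra k L] {p : ℕ}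

def IsWittFamily (e : ZMod p → L) : Prop :=
  ∀ u v, ⁅e u, e v⁆ = (ZMod.cast (v - u) : k) • e (u + v)

variable {k} {e : ZMod p → L}

theorem IsWittFamily.lie_mem_span_singleton (he : IsWittFamily k e) (α : ZMod p) {x y : L}
    (hx : x ∈ Submodule.span k {e 0, e α}) (hy : y ∈ Submodule.span k {e 0, e α}) :
    ⁅x, y⁆ ∈ k ∙ e α := by
  obtain ⟨a, b, rfl⟩ := Submodule.mem_span_pair.mp hx
  obtain ⟨c, d, rfl⟩ := Submodule.mem_span_pair.mp hy
  have h00 := he 0 0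
  have h0α := he 0 α
  have hα0 := he α 0
  simp only [sub_zero, zero_sub, add_zero, zero_add, ZMod.cast_zero, zero_smul] at h00 h0α hα0
  simp only [add_lie, lie_add, smul_lie, lie_smul, h00, h0α, hα0, lie_self, smul_zero, add_zero,
    zero_add, smul_smul, ← add_smul]
  exact Submodule.smul_mem _ _ (Submodule.mem_span_singleton_self _)

variable [Fact p.Prime] [CharP k p]

theorem IsWittFamily.add_mem (he : IsWittFamily k e) (C : LieSubalgebra k L) {u v : ZMod p}
    (hu : e u ∈ C) (hv : e v ∈ C) (huv : u ≠ v) : e (u + v) ∈ C := by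
  have := C.lie_mem hu hv
  rw [he] at this
  exact (C.toSubmodule.smul_mem_iff
    (ZMod.cast_ne_zero_of_ne_zero (sub_ne_zero.mpr huv.symm))).mp this

theorem IsWittFamily.mem_of_coeff_ne_zero (he : IsWittFamily k e) (C : LieSubalgebra k L)
    (h0 : e 0 ∈ C) {c : ZMod p → k} (hc : ∑ u, c u • e u ∈ C) {u : ZMod p} (hcu : c u ≠ 0) :
    e u ∈ C := by
  classical
  refine (C.toSubmodule.smul_mem_iff hcu).mp ?_
  refine Submodule.mem_of_sum_mem_of_eigenvectors (f := ad k L (e 0)) (μ := ZMod.cast)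
    (fun x hx => C.lie_mem h0 hx) (ZMod.castHom_injective k) (fun v => ?_) hc u
    (Finset.mem_univ u)
  rw [ad_apply, lie_smul, he, sub_zero, zero_add, smul_comm]

theorem IsWittFamily.not_isSolvable (he : IsWittFamily k e) (he0 : e 0 ≠ 0) (hp : p ≠ 2)
    (C : LieSubalgebra k L) {γ : ZMod p} (hγ : γ ≠ 0) (h0 : e 0 ∈ C) (hγC : e γ ∈ C)
    (hγC' : e (-γ) ∈ C) : ¬ IsSolvable C := by
  have h2 : (2 : ZMod p) ≠ 0 := Ring.two_ne_zero (by rwa [ZMod.ringChar_zmod_n])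
  refine not_isSolvable_of_lie_eq_smul (h := ⟨e 0, h0⟩) (e := ⟨e γ, hγC⟩) (f := ⟨e (-γ), hγC'⟩)
    (fun h => he0 congr(($h : L))) (ZMod.cast_ne_zero_of_ne_zero hγ)
    (ZMod.cast_ne_zero_of_ne_zero (neg_ne_zero.mpr hγ))
    (ZMod.cast_ne_zero_of_ne_zero (k := k) (mul_ne_zero (neg_ne_zero.mpr h2) hγ)) ?_ ?_ ?_ <;>
    ext <;> rw [LieSubalgebra.coe_bracket, he] <;> simp [two_mul, sub_eq_add_neg]

theorem IsWittFamily.le_span_pair (he : IsWittFamily k e)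
    (hspan : Submodule.span k (Set.range e) = ⊤) (he0 : e 0 ≠ 0) (hp : p ≠ 2) {α : ZMod p}
    (hα : α ≠ 0) {C : LieSubalgebra k L} (hC : IsSolvable C) (h0 : e 0 ∈ C) (hαC : e α ∈ C) :
    C.toSubmodule ≤ Submodule.span k {e 0, e α} := by
  intro x hx
  have hx' : x ∈ Submodule.span k (Set.range e) := hspan ▸ Submodule.mem_top
  obtain ⟨c, rfl⟩ := (Submodule.mem_span_range_iff_exists_fun k).mp hx'
  refine Submodule.sum_mem _ fun β _ => ?_
  rcases eq_or_ne (c β) 0 with hcβ | hcβ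
  · simp [hcβ]
  by_cases hβ : β = 0 ∨ β = α
  · rcases hβ with rfl | rfl <;> exact Submodule.smul_mem _ _ (Submodule.subset_span (by simp))
  rw [not_or] at hβ
  obtain ⟨γ, hγ, hγC, hγC'⟩ := ZMod.exists_mem_and_neg_mem hp (T := {u | e u ∈ C})
    (fun u hu v hv huv => he.add_mem C hu hv huv) h0 hαC (he.mem_of_coeff_ne_zero C h0 hx hcβ)
    hα hβ.1 (Ne.symm hβ.2)
  exact absurd hC (he.not_isSolvable he0 hp C hγ h0 hγC hγC')

theorem IsWittFamily.exists_maximal_solvable (he : IsWittFamily k e)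
    (hspan : Submodule.span k (Set.range e) = ⊤) (he0 : e 0 ≠ 0) (hp : p ≠ 2) {α : ZMod p}
    (hα : α ≠ 0) :
    ∃ B : LieSubalgebra k L, B.toSubmodule = Submodule.span k {e 0, e α} ∧ IsSolvable B ∧
      ∀ C : LieSubalgebra k L, IsSolvable C → B ≤ C → C = B := by
  obtain ⟨B, hB⟩ := (Submodule.span k {e 0, e α}).exists_lieSubalgebra_coe_eq_iff.mpr
    fun x y hx hy => Submodule.span_mono (by simp) (he.lie_mem_span_singleton α hx hy)
  have hBmem {x : L} : x ∈ B ↔ x ∈ Submodule.span k {e 0, e α} := by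
    rw [← LieSubalgebra.mem_toSubmodule, hB]
  have h0B : e 0 ∈ B := hBmem.mpr (Submodule.subset_span (by simp))
  have hαB : e α ∈ B := hBmem.mpr (Submodule.subset_span (by simp))
  refine ⟨B, hB, ?_, fun C hC hBC => le_antisymm ?_ hBC⟩
  · refine isSolvable_of_forall_lie_mem_span_singleton (R := k) (⟨e α, hαB⟩ : B) fun x y => ?_
    obtain ⟨a, ha⟩ := Submodule.mem_span_singleton.mp
      (he.lie_mem_span_singleton α (hBmem.mp x.2) (hBmem.mp y.2))
    exact Submodule.mem_span_singleton.mpr ⟨a, Subtype.ext ha⟩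
  · rw [← LieSubalgebra.toSubmodule_le_toSubmodule, hB]
    exact he.le_span_pair hspan he0 hp hα hC (hBC h0B) (hBC hαB)

end LieAlgebra

theorem Derivation.lie_smul_smul {R A : Type*} [CommRing R] [CommRing A] [Algebra R A]
    (D : Derivation R A A) (f g : A) : ⁅f • D, g • D⁆ = (f * D g - g * D f) • D := by
  ext a
  simp only [commutator_apply, smul_apply, leibniz, smul_eq_mul]
  ring

namespace TruncPolyAlg

variable (k : Type*) [Field k] (p : ℕ)

theorem truncX_pow_self : truncX k p ^ p = 0 :=
  Ideal.Quotient.eq_zero_iff_mem.mpr (Ideal.subset_span rfl)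

theorem adjoin_truncX : Algebra.adjoin k {truncX k p} = ⊤ :=
  AdjoinRoot.adjoinRoot_eq_top

variable {k p} in
theorem derivation_ext {D D' : Derivation k (TruncPolyAlg k p) (TruncPolyAlg k p)}
    (h : D (truncX k p) = D' (truncX k p)) : D = D' :=
  Derivation.ext_of_adjoin_eq_top _ (adjoin_truncX k p) (Set.eqOn_singleton.mpr h)

variable [CharP k p]

noncomputable def deriv : Derivation k (TruncPolyAlg k p) (TruncPolyAlg k p) :=
  Derivation.liftOfSurjective (Ideal.Quotient.mkₐ_surjective k _) (d := derivative')
    fun g hg => by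
      obtain ⟨h, rfl⟩ := Ideal.mem_span_singleton'.mp (Ideal.Quotient.eq_zero_iff_mem.mp hg)
      simp

theorem deriv_truncX : deriv k p (truncX k p) = 1 := by
  change deriv k p (Ideal.Quotient.mkₐ k _ X) = 1
  rw [deriv, Derivation.liftOfSurjective_apply]
  simp

theorem deriv_one_add_truncX_pow (n : ℕ) :
    deriv k p ((1 + truncX k p) ^ (n + 1)) = (n + 1 : k) • (1 + truncX k p) ^ n := by
  rw [Derivation.leibniz_pow, map_add, Derivation.map_one_eq_zero, deriv_truncX]
  simp [← Nat.cast_smul_eq_nsmul k]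

/-- The paper's `(1+x)^c ∂` with `c = u + 1`: the shift makes `wittBasis 0 = (1+x) ∂` the
element acting diagonally, with eigenvalue `u` on `wittBasis u`. -/
noncomputable def wittBasis (u : ZMod p) : Derivation k (TruncPolyAlg k p) (TruncPolyAlg k p) :=
  (1 + truncX k p) ^ (u.val + 1) • deriv k p

theorem wittBasis_truncX (u : ZMod p) :
    wittBasis k p u (truncX k p) = (1 + truncX k p) ^ (u.val + 1) := by
  simp [wittBasis, deriv_truncX]

variable [Fact p.Prime]

theorem one_add_truncX_pow_self : (1 + truncX k p) ^ p = 1 := by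
  have hfrob : (1 + X : k[X]) ^ p = 1 + X ^ p := by rw [add_pow_char, one_pow]
  simpa [truncX, truncX_pow_self] using
    congrArg (Ideal.Quotient.mk (Ideal.span {(X : k[X]) ^ p})) hfrob

theorem one_add_truncX_pow_eq_pow {m n : ℕ} (h : (m : ZMod p) = n) :
    (1 + truncX k p) ^ m = (1 + truncX k p) ^ n :=
  pow_eq_pow_of_modEq ((ZMod.natCast_eq_natCast_iff m n p).mp h) (one_add_truncX_pow_self k p)

theorem one_add_truncX_ne_zero : 1 + truncX k p ≠ 0 := by
  have : Nontrivial (TruncPolyAlg k p) :=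
    AdjoinRoot.nontrivial (X ^ p) (by simp [(Fact.out : p.Prime).ne_zero])
  intro h
  simpa [h, (Fact.out : p.Prime).ne_zero] using one_add_truncX_pow_self k p

theorem span_range_one_add_truncX_pow :
    Submodule.span k (Set.range fun u : ZMod p => (1 + truncX k p) ^ (u.val + 1)) = ⊤ := by
  have hadj : Algebra.adjoin k {1 + truncX k p} = ⊤ := by
    rw [eq_top_iff, ← adjoin_truncX, Algebra.adjoin_le_iff, Set.singleton_subset_iff]
    simpa using sub_mem (Algebra.self_mem_adjoin_singleton k (1 + truncX k p)) (one_mem _)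
  have hpow : Submodule.span k (Set.range ((1 + truncX k p) ^ · : ℕ → TruncPolyAlg k p)) = ⊤ := by
    rw [← Algebra.top_toSubmodule, ← hadj, Algebra.adjoin_eq_span, Submonoid.closure_singleton_eq]
    rfl
  refine top_unique (hpow ▸ Submodule.span_mono ?_)
  rintro _ ⟨n, rfl⟩
  exact ⟨(n : ZMod p) - 1, one_add_truncX_pow_eq_pow k p (by simp)⟩

theorem isWittFamily_wittBasis : LieAlgebra.IsWittFamily k (wittBasis k p) := fun u v => by
  rw [wittBasis, wittBasis, wittBasis, Derivation.lie_smul_smul, deriv_one_add_truncX_pow,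
    deriv_one_add_truncX_pow, ← smul_assoc]
  congr 1
  rw [one_add_truncX_pow_eq_pow k p (m := (u + v).val + 1) (n := u.val + v.val + 1) (by simp),
    ZMod.cast_sub', ZMod.cast_eq_val, ZMod.cast_eq_val, mul_smul_comm, mul_smul_comm, ← pow_add,
    ← pow_add, add_right_comm, add_right_comm v.val, add_comm v.val]
  module

theorem wittBasis_zero_ne_zero : wittBasis k p 0 ≠ 0 := fun h =>
  one_add_truncX_ne_zero k p (by simpa [h] using (wittBasis_truncX k p 0).symm)

theorem span_range_wittBasis : Submodule.span k (Set.range (wittBasis k p)) = ⊤ := by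
  let φ := (LinearMap.toSpanSingleton (TruncPolyAlg k p) _ (deriv k p)).restrictScalars k
  have hφ : Function.Surjective φ := fun D =>
    ⟨D (truncX k p), derivation_ext (by simp [φ, deriv_truncX])⟩
  rw [show wittBasis k p = φ ∘ fun u => (1 + truncX k p) ^ (u.val + 1) from rfl, Set.range_comp,
    ← Submodule.map_span, span_range_one_add_truncX_pow, Submodule.map_top,
    LinearMap.range_eq_top.mpr hφ]

end TruncPolyAlg

/-- for `p > 3` and `2 ≤ a ≤ p - 1`, the two-dimensional
subspace `k·(1+x)∂ + k·(1+x)^a∂` of `W(1) = Der_k(k[X]/(X^p))` is a Lie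
subalgebra which is maximal solvable: it is solvable and every solvable Lie
subalgebra of `W(1)` containing it equals it (no solvable subalgebra strictly
contains it). -/
theorem witt_generic_borel_maximal_solvable
    {p : ℕ} [Fact p.Prime] (hp : 3 < p) {k : Type*} [Field k] [CharP k p]
    (a : ℕ) (ha1 : 2 ≤ a) (hap : a ≤ p - 1)
    (D1 Da : Derivation k (TruncPolyAlg k p) (TruncPolyAlg k p))
    (hD1 : D1 (truncX k p) = 1 + truncX k p)
    (hDa : Da (truncX k p) = (1 + truncX k p) ^ a) :
    ∃ B : LieSubalgebra k (Derivation k (TruncPolyAlg k p) (TruncPolyAlg k p)),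
      B.toSubmodule = Submodule.span k {D1, Da} ∧
      LieAlgebra.IsSolvable B ∧
      ∀ C : LieSubalgebra k (Derivation k (TruncPolyAlg k p) (TruncPolyAlg k p)),
        LieAlgebra.IsSolvable C → B ≤ C → C = B := by
  have hαval : ((a - 1 : ℕ) : ZMod p).val = a - 1 := ZMod.val_cast_of_lt (by omega)
  have hα : ((a - 1 : ℕ) : ZMod p) ≠ 0 := fun h => by
    rw [h, ZMod.val_zero] at hαval
    omega
  have he0 : TruncPolyAlg.wittBasis k p 0 = D1 :=
    TruncPolyAlg.derivation_ext (by simp [TruncPolyAlg.wittBasis_truncX, hD1])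
  have heα : TruncPolyAlg.wittBasis k p (a - 1 : ℕ) = Da := TruncPolyAlg.derivation_ext (by
    rw [TruncPolyAlg.wittBasis_truncX, hDa, hαval, Nat.sub_add_cancel (by omega)])
  rw [← he0, ← heα]
  exact (TruncPolyAlg.isWittFamily_wittBasis k p).exists_maximal_solvable
    (TruncPolyAlg.span_range_wittBasis k p) (TruncPolyAlg.wittBasis_zero_ne_zero k p) (by omega) hα
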